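/- Let n > 1 be an odd positive integer. Then the shorter truncation ∑_{k=0}^{(n+1)/2} (q^{−1};q^2)_k^2 · q^{2k} / (q^2;q^2)_k^2 ≡ 0 (mod Φ_n(q)^2), as rational functions of q over ℚ. -/
import Mathlib


open Finset Polynomial

/-- The q-shifted factorial `(x; q)_k = ∏_{j=0}^{k-1} (1 - x q^j)` in `RatFunc ℚ`. -/
noncomputable def qPoch (x q : RatFunc ℚ) (k : ℕ) : RatFunc ℚ :=
  ∏ j ∈ Finset.range k, (1 - x * q ^ j)

/-- `A ≡ 0 (mod P)`: `A = P · B` for some rational function `B` whose denominator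
(in lowest terms) is coprime to `P`. -/
def CongrZero (A : RatFunc ℚ) (P : Polynomial ℚ) : Prop :=
  ∃ B : RatFunc ℚ, A = algebraMap (Polynomial ℚ) (RatFunc ℚ) P * B ∧ IsCoprime B.denom P

local notation "x" => (RatFunc.X : RatFunc ℚ)

lemma hpow_ne (k : ℕ) : (1 : RatFunc ℚ) - x ^ (k + 1) ≠ 0 := by
  intro h
  have h1 : x ^ (k+1) = 1 := by linear_combination -h
  have h2 : (Polynomial.X : ℚ[X]) ^ (k+1) = 1 := by
    apply RatFunc.algebraMap_injective
    simpa [map_pow, RatFunc.algebraMap_X] using h1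
  have := congrArg Polynomial.natDegree h2
  simp [Polynomial.natDegree_X_pow] at this

lemma qPochA (k : ℕ) :
    qPoch (x ^ (-1 : ℤ)) (x ^ 2) (k + 1)
      = (1 - x⁻¹) * ∏ j ∈ Finset.range k, (1 - x ^ (2 * j + 1)) := by
  rw [qPoch, Finset.prod_range_succ', mul_comm]
  have hx := RatFunc.X_ne_zero (K := ℚ)
  congr 1
  · simp [zpow_neg_one]
  · apply Finset.prod_congr rfl
    intro j _
    rw [zpow_neg_one]
    congr 1
    rw [← pow_mul]
    field_simp
    ring

lemma qPochB (k : ℕ) :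
    qPoch (x ^ 2) (x ^ 2) k = ∏ j ∈ Finset.range k, (1 - x ^ (2 * j + 2)) := by
  rw [qPoch]
  apply Finset.prod_congr rfl
  intro j _
  rw [← pow_mul]
  ring_nf

lemma key (m : ℕ) :
    ∑ k ∈ Finset.range (m + 1),
        (qPoch (x ^ (-1 : ℤ)) (x ^ 2) k) ^ 2 * x ^ (2 * k)
          / (qPoch (x ^ 2) (x ^ 2) k) ^ 2
      = (x ^ (2 * m) + 2 * ∑ i ∈ Finset.range (2 * m), x ^ i)
          * (∏ j ∈ Finset.range m, (1 - x ^ (2 * j + 1))) ^ 2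
          / (∏ j ∈ Finset.range m, (1 - x ^ (2 * j + 2))) ^ 2 := by
  induction m with
  | zero => simp [qPoch]
  | succ m ih =>
    rw [Finset.sum_range_succ, ih, qPochA, qPochB,
      Finset.prod_range_succ (f := fun j => 1 - x ^ (2*j+1)),
      Finset.prod_range_succ (f := fun j => 1 - x ^ (2*j+2)),
      show 2 * (m+1) = (2*m+1)+1 by ring, Finset.sum_range_succ, Finset.sum_range_succ]
    have hx := RatFunc.X_ne_zero (K := ℚ)
    have hx1 : x - 1 ≠ 0 := by
      have := hpow_ne 0
      intro h; apply this; rw [pow_one]; linear_combination -h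
    have hR : (∏ j ∈ Finset.range m, ((1:RatFunc ℚ) - x ^ (2 * j + 2))) ≠ 0 :=
      Finset.prod_ne_zero_iff.mpr fun j _ => hpow_ne (2*j+1)
    have h1 : (1:RatFunc ℚ) - x ^ (2*m+2) ≠ 0 := hpow_ne (2*m+1)
    have hs : (∑ i ∈ Finset.range (2*m), x ^ i) = (x ^ (2*m) - 1)/(x - 1) := by
      rw [eq_div_iff hx1]
      exact geom_sum_mul x (2*m)
    rw [hs]
    field_simp
    ring

theorem stmt5_aux (n : ℕ) (hn : 1 < n) (hodd : Odd n) :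
    (∃ B : RatFunc ℚ,
      (∑ k ∈ Finset.range ((n + 1) / 2 + 1),
        (qPoch ((RatFunc.X : RatFunc ℚ) ^ (-1 : ℤ)) (RatFunc.X ^ 2) k) ^ 2
            * RatFunc.X ^ (2 * k)
          / (qPoch ((RatFunc.X : RatFunc ℚ) ^ 2) (RatFunc.X ^ 2) k) ^ 2)
        = algebraMap (Polynomial ℚ) (RatFunc ℚ) ((Polynomial.cyclotomic n ℚ) ^ 2) * B
        ∧ IsCoprime B.denom ((Polynomial.cyclotomic n ℚ) ^ 2)) := by
  obtain ⟨l, hl⟩ := hodd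
  have hl1 : 1 ≤ l := by omega
  have hpos : 0 < n := by omega
  have hm : (n + 1) / 2 = l + 1 := by omega
  set C : ℚ[X] := ∏ d ∈ n.divisors.erase n, cyclotomic d ℚ with hC
  have hXn : cyclotomic n ℚ * C = Polynomial.X ^ n - 1 := by
    rw [hC]
    exact (Finset.mul_prod_erase n.divisors (fun d => cyclotomic d ℚ)
      (Nat.mem_divisors_self n (by omega))).trans (prod_cyclotomic_eq_X_pow_sub_one hpos ℚ)
  set φ : RatFunc ℚ := algebraMap ℚ[X] (RatFunc ℚ) (cyclotomic n ℚ) with hφ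
  set c : RatFunc ℚ := algebraMap ℚ[X] (RatFunc ℚ) C with hc
  have hfac : (1 : RatFunc ℚ) - (RatFunc.X : RatFunc ℚ) ^ n = -(φ * c) := by
    have h2 := congrArg (algebraMap ℚ[X] (RatFunc ℚ)) hXn
    simp only [map_mul, map_sub, map_pow, map_one, RatFunc.algebraMap_X] at h2
    linear_combination h2
  set A : RatFunc ℚ := RatFunc.X ^ (2 * (l+1)) + 2 * ∑ i ∈ Finset.range (2 * (l+1)), RatFunc.X ^ i with hA
  set Q' : RatFunc ℚ := ∏ j ∈ Finset.range l, (1 - RatFunc.X ^ (2 * j + 1)) with hQ'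
  set R : RatFunc ℚ := ∏ j ∈ Finset.range (l+1), (1 - RatFunc.X ^ (2 * j + 2)) with hR
  refine ⟨c ^ 2 * A * Q' ^ 2 / R ^ 2, ?_, ?_⟩
  · rw [hm, key (l+1)]
    rw [Finset.prod_range_succ (f := fun j => (1:RatFunc ℚ) - RatFunc.X ^ (2*j+1)),
      show 2 * l + 1 = n from by omega, hfac, map_pow]
    rw [hA, hQ', hR]
    ring
  · set NN : ℚ[X] := C ^ 2 * (Polynomial.X ^ (2 * (l+1))
        + 2 * ∑ i ∈ Finset.range (2 * (l+1)), Polynomial.X ^ i)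
        * (∏ j ∈ Finset.range l, (1 - Polynomial.X ^ (2 * j + 1))) ^ 2 with hNN
    set DD : ℚ[X] := (∏ j ∈ Finset.range (l+1), (1 - Polynomial.X ^ (2 * j + 2))) ^ 2 with hDD
    have hBeq : c ^ 2 * A * Q' ^ 2 / R ^ 2
        = algebraMap ℚ[X] (RatFunc ℚ) NN / algebraMap ℚ[X] (RatFunc ℚ) DD := by
      rw [hA, hQ', hR, hc, hNN, hDD]
      simp only [map_mul, map_pow, map_add, map_sum, map_prod, map_sub, map_one, map_ofNat,
        RatFunc.algebraMap_X]
    have hdvd : (c ^ 2 * A * Q' ^ 2 / R ^ 2).denom ∣ DD := by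
      rw [hBeq]; exact RatFunc.denom_div_dvd NN DD
    have hcop : IsCoprime (cyclotomic n ℚ) DD := by
      apply IsCoprime.pow_right
      apply IsCoprime.prod_right
      intro j hj
      rw [(cyclotomic.irreducible_rat hpos).coprime_iff_not_dvd]
      intro hdvd'
      haveI : NeZero ((n : ℂ)) := ⟨Nat.cast_ne_zero.mpr (by omega)⟩
      have hζ : IsPrimitiveRoot (Complex.exp (2 * Real.pi * Complex.I / n)) n :=
        Complex.isPrimitiveRoot_exp n (by omega)
      set ζ := Complex.exp (2 * Real.pi * Complex.I / n)
      have hroot : (cyclotomic n ℂ).IsRoot ζ := Polynomial.isRoot_cyclotomic_iff.mpr hζ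
      have hdvd2 : cyclotomic n ℂ ∣ (1 - Polynomial.X ^ (2 * j + 2)) := by
        have h3 := Polynomial.map_dvd (algebraMap ℚ ℂ) hdvd'
        simpa [map_cyclotomic, Polynomial.map_sub, Polynomial.map_pow, Polynomial.map_one,
          Polynomial.map_X] using h3
      obtain ⟨g, hg⟩ := hdvd2
      have heval : (1 : ℂ) - ζ ^ (2 * j + 2) = 0 := by
        have h4 := congrArg (Polynomial.eval ζ) hg
        simp only [Polynomial.eval_mul, Polynomial.eval_sub, Polynomial.eval_pow,
          Polynomial.eval_one, Polynomial.eval_X] at h4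
        rw [Polynomial.IsRoot.eq_zero hroot, zero_mul] at h4
        exact h4
      have h5 : ζ ^ (2 * j + 2) = 1 := by linear_combination -heval
      have h6 : n ∣ 2 * j + 2 := (hζ.pow_eq_one_iff_dvd _).mp h5
      have h7 : n ≤ 2 * j + 2 := Nat.le_of_dvd (by omega) h6
      have hjl : j < l + 1 := Finset.mem_range.mp hj
      have h8 : 2 * j + 2 = n ∨ 2 * j + 2 = n + 1 := by omega
      rcases h8 with h8 | h8
      · omega
      · rw [h8] at h6
        have h9 : n ∣ 1 := by simpa using Nat.dvd_sub h6 (dvd_refl n)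
        have := Nat.dvd_one.mp h9
        omega
    exact IsCoprime.of_isCoprime_of_dvd_left (hcop.symm.pow_right (n := 2)) hdvd


theorem stmt5 (n : ℕ) (hn : 1 < n) (hodd : Odd n) :
    CongrZero
      (∑ k ∈ Finset.range ((n + 1) / 2 + 1),
        (qPoch ((RatFunc.X : RatFunc ℚ) ^ (-1 : ℤ)) (RatFunc.X ^ 2) k) ^ 2
            * RatFunc.X ^ (2 * k)
          / (qPoch ((RatFunc.X : RatFunc ℚ) ^ 2) (RatFunc.X ^ 2) k) ^ 2)
      ((Polynomial.cyclotomic n ℚ) ^ 2) := by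
  unfold CongrZero
  exact stmt5_aux n hn hodd
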